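/- Let k ≥ 1 and l be integers with k+2 ≤ l ≤ k+4. Then R^l_k = {e_i − e_j : 1 ≤ i, j ≤ l, i ≠ j} ∪ {ε·(e₀ − Σ_{i∈S} e_i) : ε ∈ {1, −1}, S ⊆ {1, …, l}, |S| = k+2}; that is, the roots are exactly the differences of two distinct exceptional basis vectors together with the vectors ±(e₀ − e_{i₁} − ⋯ − e_{i_{k+2}}) for all choices of k+2 distinct indices in {1, …, l}. -/

import Mathlib

/-- The standard basis vector `e_n` of `ℤ^{l+1}` (for `n ≤ l`). -/
def unitVec (l n : ℕ) : Fin (l + 1) → ℤ :=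
  fun i => if (i : ℕ) = n then 1 else 0

/-- The symmetric bilinear form on `ℤ^{l+1}` with `B(e₀,e₀) = k`, `B(eᵢ,eᵢ) = -1` for
`1 ≤ i ≤ l`, and `B(eᵢ,eⱼ) = 0` for `i ≠ j`. -/
def bformZ (k l : ℕ) (v w : Fin (l + 1) → ℤ) : ℤ :=
  ((k : ℤ) + 1) * (v 0 * w 0) - ∑ i, v i * w i

/-- The vector `ω' = -(k+2)·e₀ + k·(e₁ + ⋯ + e_l)`. -/
def omegaZ (k l : ℕ) : Fin (l + 1) → ℤ :=
  fun i => if i = 0 then -((k : ℤ) + 2) else (k : ℤ)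

/-- The root system `R^l_k = {v ∈ ℤ^{l+1} : B(v,v) = -2, B(v,ω') = 0}`. -/
def rootSet (k l : ℕ) : Set (Fin (l + 1) → ℤ) :=
  {v | bformZ k l v v = -2 ∧ bformZ k l v (omegaZ k l) = 0}

/-!
Write `v = (a, w)` with `a = v₀` and `w ∈ ℤ^l`. For `k ≠ 0` the two conditions say
`∑ wᵢ² = k a² + 2` and `∑ wᵢ = -(k + 2) a`. Summing the integer inequality
`(2t - 1)|x| ≤ x² + t(t - 1)` (with `t = |a|`) over the coordinates of `w` and using
`|∑ wᵢ| ≤ ∑ |wᵢ|` gives `(t - 1)((k + 4 - l) t + 2) ≤ 0`, so `|a| ≤ 1` once `l ≤ k + 4`.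
If `a = 0`, then `∑ wᵢ² = 2` and `∑ wᵢ = 0` force `w = eᵢ - eⱼ`. If `a = ±1`, then
`∑ wᵢ (wᵢ + a) = 0` is a sum of products of consecutive integers, so every `wᵢ ∈ {0, -a}`.
-/

open Finset

lemma Int.mul_add_one_nonneg (n : ℤ) : 0 ≤ n * (n + 1) := by
  rcases le_or_gt 0 n with h | h
  · positivity
  · nlinarith

lemma Int.two_mul_sub_one_mul_abs_le (x t : ℤ) : (2 * t - 1) * |x| ≤ x ^ 2 + t * (t - 1) := by
  nlinarith [Int.mul_add_one_nonneg (|x| - t), sq_abs x]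

section IntegerVectors

variable {ι : Type*} [Fintype ι] {w : ι → ℤ} {a : ℤ} {k : ℕ}

theorem abs_le_one_of_sum_sq_of_sum (hι : Fintype.card ι ≤ k + 4)
    (hsq : ∑ i, w i ^ 2 = k * a ^ 2 + 2) (hsum : ∑ i, w i = -(k + 2) * a) : |a| ≤ 1 := by
  by_contra! ha
  set t := |a|
  have hl1 : (k + 2) * t ≤ ∑ i, |w i| := by
    have h := abs_sum_le_sum_abs w univ
    rwa [hsum, abs_mul, abs_neg, abs_of_nonneg (by positivity : (0 : ℤ) ≤ k + 2)] at h
  have hl2 : ∑ i, (2 * t - 1) * |w i| ≤ ∑ i, (w i ^ 2 + t * (t - 1)) :=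
    sum_le_sum fun i _ => Int.two_mul_sub_one_mul_abs_le (w i) t
  rw [← mul_sum, sum_add_distrib, hsq, sum_const, card_univ, nsmul_eq_mul, ← sq_abs] at hl2
  have hι' : (Fintype.card ι : ℤ) ≤ k + 4 := by exact_mod_cast hι
  nlinarith [mul_le_mul_of_nonneg_left hl1 (by omega : (0 : ℤ) ≤ 2 * t - 1),
    mul_nonneg (mul_nonneg (abs_nonneg a) (by omega : (0 : ℤ) ≤ t - 1)) (sub_nonneg.2 hι')]

theorem exists_eq_single_sub_single_of_sum_sq_eq_two [DecidableEq ι] (hsq : ∑ i, w i ^ 2 = 2)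
    (hsum : ∑ i, w i = 0) : ∃ i j, i ≠ j ∧ w = Pi.single i 1 - Pi.single j 1 := by
  have hle : ∀ i, w i ^ 2 ≤ 2 := fun i =>
    hsq ▸ single_le_sum (fun j _ => sq_nonneg (w j)) (mem_univ i)
  have hne : ∃ i ∈ univ, w i ≠ 0 := by
    by_contra! h
    rw [sum_eq_zero fun i hi => by simp [h i hi]] at hsq
    exact absurd hsq (by norm_num)
  obtain ⟨i, -, hi⟩ := exists_pos_of_sum_zero_of_exists_nonzero w hsum hne
  obtain ⟨j, -, hj⟩ := exists_pos_of_sum_zero_of_exists_nonzero (s := univ) (-w)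
    (by simp [hsum]) (by simpa using hne)
  have hi1 : w i = 1 := by nlinarith [hle i]
  have hj1 : w j = -1 := by nlinarith [hle j, show w j < 0 by simpa using hj]
  have hij : i ≠ j := by rintro rfl; omega
  have hrest : ∀ m, m ≠ i → m ≠ j → w m = 0 := by
    intro m hmi hmj
    have h3 : ∑ x ∈ {i, j, m}, w x ^ 2 ≤ 2 :=
      hsq ▸ sum_le_sum_of_subset_of_nonneg (subset_univ _) fun x _ _ => sq_nonneg (w x)
    rw [sum_insert (by simp [hij, hmi.symm]), sum_pair hmj.symm, hi1, hj1] at h3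
    nlinarith
  refine ⟨i, j, hij, funext fun m => ?_⟩
  by_cases hmi : m = i
  · simp [hmi, hi1, hij]
  by_cases hmj : m = j
  · simp [hmj, hj1, hij.symm]
  simp [hrest m hmi hmj, hmi, hmj]

theorem exists_eq_ite_of_sum_sq_eq [DecidableEq ι] (ha : a = 1 ∨ a = -1)
    (h : ∑ i, w i ^ 2 = -a * ∑ i, w i) : ∃ T : Finset ι, w = fun i => if i ∈ T then -a else 0 := by
  have hterm : ∀ i ∈ univ, 0 ≤ w i * (w i + a) := by
    rintro i -
    rcases ha with rfl | rfl
    · exact Int.mul_add_one_nonneg (w i)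
    · nlinarith [Int.mul_add_one_nonneg (w i - 1)]
  have hzero : ∑ i, w i * (w i + a) = 0 := by
    simp only [mul_add, sum_add_distrib, ← sum_mul, ← sq, h]
    ring
  refine ⟨univ.filter (w · = -a), funext fun i => ?_⟩
  rcases mul_eq_zero.1 ((sum_eq_zero_iff_of_nonneg hterm).1 hzero i (mem_univ i)) with hi | hi
  · simp [hi]
  · have : w i = -a := by omega
    simp [this]

lemma sum_sq_single_sub_single [DecidableEq ι] {i j : ι} (hij : i ≠ j) :
    ∑ x, ((Pi.single i 1 - Pi.single j 1 : ι → ℤ) x) ^ 2 = 2 := by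
  rw [Fintype.sum_eq_add i j hij fun x hx => by simp [hx.1, hx.2]]
  simp [hij, hij.symm]

lemma sum_sq_ite_mem [DecidableEq ι] (T : Finset ι) (b : ℤ) :
    ∑ i, (if i ∈ T then b else 0) ^ 2 = #T * b ^ 2 := by
  simp

theorem sum_sq_eq_and_sum_eq_iff [DecidableEq ι] (hι : Fintype.card ι ≤ k + 4) :
    (∑ i, w i ^ 2 = k * a ^ 2 + 2 ∧ ∑ i, w i = -(k + 2) * a) ↔
      (a = 0 ∧ ∃ i j, i ≠ j ∧ w = Pi.single i 1 - Pi.single j 1) ∨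
      ((a = 1 ∨ a = -1) ∧ ∃ T : Finset ι, #T = k + 2 ∧ w = fun i => if i ∈ T then -a else 0) := by
  constructor
  · rintro ⟨hsq, hsum⟩
    obtain rfl | ha : a = 0 ∨ (a = 1 ∨ a = -1) := by
      have := abs_le.1 (abs_le_one_of_sum_sq_of_sum hι hsq hsum)
      omega
    · left
      exact ⟨rfl, exists_eq_single_sub_single_of_sum_sq_eq_two (by simpa using hsq)
        (by simpa using hsum)⟩
    · right
      have ha2 : a ^ 2 = 1 := by rcases ha with rfl | rfl <;> norm_num
      obtain ⟨T, rfl⟩ := exists_eq_ite_of_sum_sq_eq ha (by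
        rw [hsq, hsum]
        linear_combination (-2 : ℤ) * ha2)
      rw [sum_sq_ite_mem, neg_sq, ha2, mul_one, mul_one] at hsq
      exact ⟨ha, T, by exact_mod_cast hsq, rfl⟩
  · rintro (⟨rfl, i, j, hij, rfl⟩ | ⟨ha, T, hT, rfl⟩)
    · simpa using sum_sq_single_sub_single hij
    · have ha2 : a ^ 2 = 1 := by rcases ha with rfl | rfl <;> norm_num
      rw [sum_sq_ite_mem, Fintype.sum_ite_mem, sum_const, nsmul_eq_mul, hT, neg_sq, ha2]
      push_cast
      constructor <;> ring

end IntegerVectors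

theorem Fin.eq_iff_zero_and_tail {n : ℕ} {α : Type*} {v u : Fin (n + 1) → α} :
    v = u ↔ v 0 = u 0 ∧ Fin.tail v = Fin.tail u := by
  rw [← Fin.cons_self_tail v, ← Fin.cons_self_tail u, Fin.cons_inj]
  simp

lemma exists_fin_add_one_eq {l n : ℕ} (h1 : 1 ≤ n) (hl : n ≤ l) :
    ∃ i : Fin l, (i : ℕ) + 1 = n :=
  ⟨⟨n - 1, by omega⟩, by simp; omega⟩

theorem mem_rootSet_iff {k l : ℕ} (hk : k ≠ 0) (v : Fin (l + 1) → ℤ) :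
    v ∈ rootSet k l ↔
      ∑ i, Fin.tail v i ^ 2 = k * v 0 ^ 2 + 2 ∧ ∑ i, Fin.tail v i = -(k + 2) * v 0 := by
  have hk' : (k : ℤ) ≠ 0 := by exact_mod_cast hk
  simp only [rootSet, bformZ, omegaZ, Set.mem_ofPred_eq, Fin.sum_univ_succ, Fin.succ_ne_zero,
    if_true, if_false, Fin.tail, ← sum_mul, sq]
  constructor
  · rintro ⟨hvv, hvo⟩
    refine ⟨by linarith, mul_right_cancel₀ hk' ?_⟩
    linear_combination -hvo
  · rintro ⟨hvv, hvo⟩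
    exact ⟨by linarith, by rw [hvo]; ring⟩

lemma unitVec_succ_apply_zero {l : ℕ} (i : Fin l) : unitVec l (i + 1) 0 = 0 := by
  simp [unitVec]

lemma tail_unitVec_succ {l : ℕ} (i : Fin l) : Fin.tail (unitVec l (i + 1)) = Pi.single i 1 := by
  ext j
  simp [unitVec, Fin.tail, Pi.single_apply, Fin.ext_iff]

theorem exists_unitVec_sub_unitVec_iff {l : ℕ} (v : Fin (l + 1) → ℤ) :
    (∃ i j : ℕ, 1 ≤ i ∧ i ≤ l ∧ 1 ≤ j ∧ j ≤ l ∧ i ≠ j ∧ v = unitVec l i - unitVec l j) ↔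
      v 0 = 0 ∧ ∃ i j : Fin l, i ≠ j ∧ Fin.tail v = Pi.single i 1 - Pi.single j 1 := by
  constructor
  · rintro ⟨_, _, hi1, hil, hj1, hjl, hij, rfl⟩
    obtain ⟨i, rfl⟩ := exists_fin_add_one_eq hi1 hil
    obtain ⟨j, rfl⟩ := exists_fin_add_one_eq hj1 hjl
    refine ⟨by simp [unitVec_succ_apply_zero], i, j, fun h => hij (by rw [h]), ?_⟩
    exact congrArg₂ (· - ·) (tail_unitVec_succ i) (tail_unitVec_succ j)
  · rintro ⟨h0, i, j, hij, ht⟩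
    refine ⟨i + 1, j + 1, by omega, i.isLt, by omega, j.isLt, by simpa [Fin.ext_iff] using hij, ?_⟩
    rw [Fin.eq_iff_zero_and_tail]
    refine ⟨by simp [h0, unitVec_succ_apply_zero], ?_⟩
    rw [ht, ← tail_unitVec_succ, ← tail_unitVec_succ]
    rfl

lemma Icc_one_eq_map_succ (l : ℕ) :
    Icc 1 l = (univ : Finset (Fin l)).map ((Fin.succEmb l).trans Fin.valEmbedding) := by
  ext n
  simp only [mem_Icc, mem_map, mem_univ, true_and, Function.Embedding.trans_apply,
    Fin.coe_succEmb, Fin.valEmbedding_apply, Fin.val_succ]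
  exact ⟨fun ⟨h1, hl⟩ => exists_fin_add_one_eq h1 hl, by rintro ⟨i, rfl⟩; omega⟩

lemma smul_sub_sum_unitVec_apply_zero {l : ℕ} (ε : ℤ) (T : Finset (Fin l)) :
    (ε • (unitVec l 0 - ∑ i ∈ T, unitVec l (i + 1))) 0 = ε := by
  simp [Finset.sum_apply, unitVec]

lemma tail_smul_sub_sum_unitVec {l : ℕ} (ε : ℤ) (T : Finset (Fin l)) :
    Fin.tail (ε • (unitVec l 0 - ∑ i ∈ T, unitVec l (i + 1))) =
      fun i => if i ∈ T then -ε else 0 := by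
  ext j
  by_cases hj : j ∈ T <;> simp [Fin.tail, Finset.sum_apply, unitVec, Fin.val_inj, hj]

theorem eq_smul_sub_sum_unitVec_iff {l : ℕ} (v : Fin (l + 1) → ℤ) (ε : ℤ) (T : Finset (Fin l)) :
    v = ε • (unitVec l 0 - ∑ i ∈ T, unitVec l (i + 1)) ↔
      v 0 = ε ∧ Fin.tail v = fun i => if i ∈ T then -ε else 0 := by
  rw [Fin.eq_iff_zero_and_tail, smul_sub_sum_unitVec_apply_zero, tail_smul_sub_sum_unitVec]

theorem exists_smul_sub_sum_unitVec_iff {l m : ℕ} (v : Fin (l + 1) → ℤ) :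
    (∃ ε : ℤ, (ε = 1 ∨ ε = -1) ∧ ∃ S : Finset ℕ, S ⊆ Icc 1 l ∧
        S.card = m ∧ v = ε • (unitVec l 0 - ∑ i ∈ S, unitVec l i)) ↔
      (v 0 = 1 ∨ v 0 = -1) ∧ ∃ T : Finset (Fin l), #T = m ∧
        Fin.tail v = fun i => if i ∈ T then -v 0 else 0 := by
  simp only [Icc_one_eq_map_succ, subset_map_iff, subset_univ, true_and]
  constructor
  · rintro ⟨ε, hε, _, ⟨T, rfl⟩, hcard, hv⟩
    rw [sum_map] at hv
    obtain ⟨rfl, ht⟩ := (eq_smul_sub_sum_unitVec_iff v ε T).1 hv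
    exact ⟨hε, T, by simpa using hcard, ht⟩
  · rintro ⟨hε, T, hcard, ht⟩
    refine ⟨v 0, hε, _, ⟨T, rfl⟩, by simpa using hcard, ?_⟩
    rw [sum_map]
    exact (eq_smul_sub_sum_unitVec_iff v (v 0) T).2 ⟨rfl, ht⟩

theorem rootSet_eq_union_general (k l : ℕ) (hk : 1 ≤ k) (hhi : l ≤ k + 4) :
    rootSet k l =
      {v | ∃ i j : ℕ, 1 ≤ i ∧ i ≤ l ∧ 1 ≤ j ∧ j ≤ l ∧ i ≠ j ∧
        v = unitVec l i - unitVec l j} ∪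
      {v | ∃ ε : ℤ, (ε = 1 ∨ ε = -1) ∧ ∃ S : Finset ℕ, S ⊆ Finset.Icc 1 l ∧
        S.card = k + 2 ∧ v = ε • (unitVec l 0 - ∑ i ∈ S, unitVec l i)} := by
  ext v
  rw [mem_rootSet_iff (by omega), sum_sq_eq_and_sum_eq_iff (by simpa using hhi), Set.mem_union,
    Set.mem_ofPred_eq, Set.mem_ofPred_eq, exists_unitVec_sub_unitVec_iff,
    exists_smul_sub_sum_unitVec_iff]

/-- For `k+2 ≤ l ≤ k+4`, the roots of `R^l_k` are exactly the differences
`eᵢ - eⱼ` of two distinct exceptional basis vectors together with the vectors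
`±(e₀ - e_{i₁} - ⋯ - e_{i_{k+2}})` for all choices of `k+2` distinct indices in
`{1, …, l}`. -/
theorem rootSet_eq_union (k l : ℕ) (hk : 1 ≤ k) (hlo : k + 2 ≤ l) (hhi : l ≤ k + 4) :
    rootSet k l =
      {v | ∃ i j : ℕ, 1 ≤ i ∧ i ≤ l ∧ 1 ≤ j ∧ j ≤ l ∧ i ≠ j ∧
        v = unitVec l i - unitVec l j} ∪
      {v | ∃ ε : ℤ, (ε = 1 ∨ ε = -1) ∧ ∃ S : Finset ℕ, S ⊆ Finset.Icc 1 l ∧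
        S.card = k + 2 ∧ v = ε • (unitVec l 0 - ∑ i ∈ S, unitVec l i)} :=
  rootSet_eq_union_general k l hk hhi
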